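/- Let A be a commutative ring, I ⊆ A an ideal, N a projective A-module, and p : M → N a surjective A-module homomorphism. If s̄ : N/IN → M/IM is a section of the induced map p̄ : M/IM → N/IN (i.e. p̄ ∘ s̄ = id), then there exists a section s : N → M of p (p ∘ s = id) such that the reduction of s modulo I equals s̄, i.e. the square formed by s, s̄ and the canonical projections M → M/IM, N → N/IN commutes. -/
import Mathlib


/-- `p` maps `I•M` into `I•N`, so it descends to quotients. -/
theorem smul_top_le_comap {A : Type*} [CommRing A] (I : Ideal A)
    {M N : Type*} [AddCommGroup M] [Module A M] [AddCommGroup N] [Module A N]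
    (p : M →ₗ[A] N) :
    I • (⊤ : Submodule A M) ≤ Submodule.comap p (I • (⊤ : Submodule A N)) := by
  refine Submodule.smul_le.2 fun r hr m _ => ?_
  simp only [Submodule.mem_comap, map_smul]
  exact Submodule.smul_mem_smul hr trivial

/-- Lifting sections: if `N` is projective, `p : M → N` is surjective, and
`s̄` is a section of the induced map `p̄ : M/IM → N/IN`, then there is a section
`s` of `p` lifting `s̄`. -/
theorem stmt_1 {A : Type*} [CommRing A] (I : Ideal A)
    {M N : Type*} [AddCommGroup M] [Module A M] [AddCommGroup N] [Module A N]
    [Module.Projective A N]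
    (p : M →ₗ[A] N) (hp : Function.Surjective p)
    (sbar : (N ⧸ (I • ⊤ : Submodule A N)) →ₗ[A] (M ⧸ (I • ⊤ : Submodule A M)))
    (hsec : (Submodule.mapQ (I • ⊤) (I • ⊤) p (smul_top_le_comap I p)).comp sbar
      = LinearMap.id) :
    ∃ s : N →ₗ[A] M, p.comp s = LinearMap.id ∧
      (Submodule.mkQ (I • ⊤ : Submodule A M)).comp s
        = sbar.comp (Submodule.mkQ (I • ⊤ : Submodule A N)) := by
  -- Step 1: lift `sbar ∘ mkQ` through `mkQ : M → M/IM`.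
  obtain ⟨t, ht⟩ := Module.projective_lifting_property
    (Submodule.mkQ (I • ⊤ : Submodule A M))
    (sbar.comp (Submodule.mkQ (I • ⊤ : Submodule A N)))
    (Submodule.mkQ_surjective _)
  -- Step 2: the defect `d = id - p ∘ t` lands in `I • N`.
  set d : N →ₗ[A] N := LinearMap.id - p.comp t with hd
  have hdmem : ∀ n, d n ∈ (I • ⊤ : Submodule A N) := by
    intro n
    have h1 : Submodule.mapQ (I • ⊤) (I • ⊤) p (smul_top_le_comap I p)
        (Submodule.mkQ _ (t n)) = Submodule.mkQ _ n := by
      have := congrArg (fun f => f n) ht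
      simp only [LinearMap.comp_apply] at this
      rw [this]
      have := congrArg (fun f => f (Submodule.mkQ (I • ⊤ : Submodule A N) n)) hsec
      simpa using this
    rw [show Submodule.mkQ (I • ⊤ : Submodule A M) (t n) = Submodule.Quotient.mk (t n) from rfl,
      Submodule.mapQ_apply] at h1
    have := (Submodule.Quotient.eq _).1 h1
    simpa [hd, sub_mem_comm_iff] using this
  -- corestriction of d
  let d' : N →ₗ[A] (I • ⊤ : Submodule A N) := d.codRestrict _ hdmem
  -- restriction of p
  have hres : ∀ x ∈ (I • ⊤ : Submodule A M), p x ∈ (I • ⊤ : Submodule A N) :=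
    fun x hx => smul_top_le_comap I p hx
  let p' : (I • ⊤ : Submodule A M) →ₗ[A] (I • ⊤ : Submodule A N) := p.restrict hres
  have hp' : Function.Surjective p' := by
    rintro ⟨y, hy⟩
    have : Submodule.map p (I • ⊤ : Submodule A M) = (I • ⊤ : Submodule A N) := by
      rw [Submodule.map_smul'', Submodule.map_top, LinearMap.range_eq_top.2 hp]
    rw [← this] at hy
    obtain ⟨x, hx, hpx⟩ := hy
    exact ⟨⟨x, hx⟩, Subtype.ext hpx⟩
  obtain ⟨u, hu⟩ := Module.projective_lifting_property p' d' hp'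
  refine ⟨t + (Submodule.subtype _).comp u, ?_, ?_⟩
  · ext n
    have hun : p' (u n) = d' n := by rw [← LinearMap.comp_apply, hu]
    have : p (u n : M) = d n := congrArg Subtype.val hun
    simp [LinearMap.comp_apply, this, hd]
  · ext n
    have : (u n : M) ∈ (I • ⊤ : Submodule A M) := (u n).2
    have h0 : Submodule.mkQ (I • ⊤ : Submodule A M) (u n : M) = 0 :=
      (Submodule.Quotient.mk_eq_zero _).2 this
    have := congrArg (fun f => f n) ht
    simp only [LinearMap.comp_apply] at this ⊢
    simp [← Submodule.mkQ_apply, h0, this]
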